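/- Let M ⊆ B(H,K) be a TRO and let A ⊆ B(H), B ⊆ B(K) be norm-closed subalgebras with A = closure(span(M* B M)) and B = closure(span(M A M*)). Then, writing C = closure(span(M* M)) and D = closure(span(M M*)), the spaces A₀ = closure(A + C) and B₀ = closure(B + D) satisfy A₀ = closure(span(M* B₀ M)) and B₀ = closure(span(M A₀ M*)). -/

import Mathlib

open ContinuousLinearMap

noncomputable section

/-- Norm closure of the linear span of a set of operators. -/
def csp {E : Type*} [NormedAddCommGroup E] [NormedSpace ℂ E] (S : Set E) : Set E :=
  closure (Submodule.span ℂ S : Set E)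

/-!
Since `B ⊆ B₀`, the hypothesis `A = csp (M* B M)` gives `A ⊆ csp (M* B₀ M)`; conversely, the TRO
identity `m* (k l*) n = (l k* m)* n` shows that the maps `b ↦ m* b n` send `B + D` into `A + C`.
The one analytic point is `C ⊆ csp (M* D M)`: for `a = m m*` and `c = (‖a‖ + 1)⁻¹` the elements
`1 - (1 - c a) ^ N` lie in the algebra `span (M M*)`, and `m* (1 - c a) ^ N → 0` because
`‖m* (1 - c a) ^ N‖² = ‖a (1 - c a) ^ (2N)‖ ≤ (‖a‖ + 1) / (2N + 1)` by the continuous functional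
calculus and Bernoulli's inequality. The second identity is the first one for the TRO
`M* ⊆ B(K, H)`.
-/

section TRO

open Filter Topology Submodule
open scoped Pointwise

lemma one_sub_one_sub_pow_mem {R S : Type*} [Ring R] [SetLike S R] [NonUnitalSubringClass S R]
    {s : S} {x : R} (hx : x ∈ s) (N : ℕ) : 1 - (1 - x) ^ N ∈ s := by
  induction N with
  | zero => simp
  | succ N ih =>
    have h : 1 - (1 - x) ^ (N + 1) = x + (1 - (1 - x) ^ N) - x * (1 - (1 - x) ^ N) := by
      rw [pow_succ']; noncomm_ring
    rw [h]
    exact sub_mem (add_mem hx ih) (mul_mem hx ih)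

lemma mul_mem_span_of_mul_subset {R A : Type*} [CommSemiring R] [Semiring A] [Algebra R A]
    {s : Set A} (hs : s * s ⊆ s) {x y : A} (hx : x ∈ span R s) (hy : y ∈ span R s) :
    x * y ∈ span R s :=
  span_mono hs (span_mul_span R s s ▸ mul_mem_mul hx hy)

lemma csp_eq_topologicalClosure {E : Type*} [NormedAddCommGroup E] [NormedSpace ℂ E]
    (s : Set E) : csp s = ((span ℂ s).topologicalClosure : Set E) :=
  (topologicalClosure_coe _).symm

lemma setOf_exists_add_eq_sup {R E : Type*} [Semiring R] [AddCommMonoid E] [Module R E]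
    (p q : Submodule R E) : {x | ∃ a ∈ p, ∃ b ∈ q, x = a + b} = ↑(p ⊔ q) := by
  ext x
  rw [Set.mem_ofPred_eq, SetLike.mem_coe, Submodule.mem_sup]
  constructor <;> rintro ⟨a, ha, b, hb, rfl⟩ <;> exact ⟨a, ha, b, hb, rfl⟩

lemma mul_one_sub_pow_le_inv {s : ℝ} (hs₀ : 0 ≤ s) (hs₁ : s ≤ 1) (N : ℕ) :
    s * (1 - s) ^ N ≤ (N + 1 : ℝ)⁻¹ := by
  have bernoulli : 1 + N * s ≤ (1 + s) ^ N := one_add_mul_le_pow (by linarith) N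
  have hprod : (1 - s) ^ N * (1 + s) ^ N ≤ 1 := by
    rw [← mul_pow]; exact pow_le_one₀ (by nlinarith) (by nlinarith)
  have hpow : 0 ≤ (1 - s) ^ N := pow_nonneg (by linarith) N
  rw [← one_div, le_div_iff₀ (by positivity)]
  nlinarith [mul_le_mul_of_nonneg_left bernoulli hpow, mul_nonneg hpow (sub_nonneg.2 hs₁)]

lemma norm_mul_one_sub_smul_pow_le {A : Type*} [CStarAlgebra A] [PartialOrder A]
    [StarOrderedRing A] {a : A} (ha : 0 ≤ a) (N : ℕ) :
    ‖a * (1 - (‖a‖ + 1)⁻¹ • a) ^ N‖ ≤ (‖a‖ + 1) / (N + 1) := by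
  set c : ℝ := (‖a‖ + 1)⁻¹
  have hcfc : cfc (fun t : ℝ => t * (1 - c * t) ^ N) a = a * (1 - c • a) ^ N := by
    rw [cfc_mul _ _ a, cfc_pow _ N a, cfc_sub _ _ a, cfc_const_mul c _ a, cfc_const_one ℝ a,
      cfc_id' ℝ a]
  rw [← hcfc]
  refine norm_cfc_le (by positivity) fun t ht => ?_
  obtain _ | _ := subsingleton_or_nontrivial A
  · simp [spectrum.of_subsingleton] at ht
  have ht₀ : 0 ≤ t := spectrum_nonneg_of_nonneg ha ht
  have ht₁ : t ≤ ‖a‖ := (le_abs_self t).trans (by simpa using spectrum.norm_le_norm_of_mem ht)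
  have hct₁ : c * t ≤ 1 := by
    rw [inv_mul_le_one₀ (by positivity)]; linarith
  have hc : c * (‖a‖ + 1) = 1 := inv_mul_cancel₀ (by positivity)
  rw [Real.norm_of_nonneg (mul_nonneg ht₀ (pow_nonneg (by linarith) N)), div_eq_mul_inv]
  calc t * (1 - c * t) ^ N = (‖a‖ + 1) * (c * t * (1 - c * t) ^ N) := by
        rw [← mul_assoc, ← mul_assoc, mul_comm (‖a‖ + 1) c, hc, one_mul]
    _ ≤ _ := mul_le_mul_of_nonneg_left (mul_one_sub_pow_le_inv (by positivity) hct₁ N)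
        (by positivity)

variable {H K : Type*}
  [NormedAddCommGroup H] [InnerProductSpace ℂ H] [CompleteSpace H]
  [NormedAddCommGroup K] [InnerProductSpace ℂ K] [CompleteSpace K]

lemma tendsto_adjoint_comp_one_sub_smul_pow (m : H →L[ℂ] K) :
    Tendsto (fun N : ℕ => adjoint m ∘L
      (1 - (‖m ∘L adjoint m‖ + 1)⁻¹ • (m ∘L adjoint m)) ^ N) atTop (𝓝 0) := by
  set a := m ∘L adjoint m
  set v := 1 - (‖a‖ + 1)⁻¹ • a
  have ha : 0 ≤ a := (nonneg_iff_isPositive a).2 (isPositive_self_comp_adjoint m)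
  have hv : IsSelfAdjoint v := IsSelfAdjoint.sub (IsSelfAdjoint.one _)
    (IsSelfAdjoint.smul (IsSelfAdjoint.all _) ha.isSelfAdjoint)
  have hcomm : Commute a v :=
    Commute.sub_right (Commute.one_right a) (Commute.smul_right (Commute.refl a) _)
  have hsq : ∀ N : ℕ, ‖adjoint m ∘L v ^ N‖ ^ 2 ≤ (‖a‖ + 1) * (1 / ((N : ℝ) + 1)) := fun N => by
    have hstar : adjoint (adjoint m ∘L v ^ N) ∘L (adjoint m ∘L v ^ N) = a * v ^ (N + N) := by
      rw [adjoint_comp, adjoint_adjoint, (hv.pow N).adjoint_eq, pow_add, ← mul_assoc,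
        (hcomm.pow_right N).eq]
      rfl
    rw [sq, ← norm_adjoint_comp_self, hstar, mul_one_div]
    refine (norm_mul_one_sub_smul_pow_le ha _).trans (div_le_div_of_nonneg_left (by positivity)
      (by positivity) (by push_cast; linarith))
  have hlim : Tendsto (fun N : ℕ => √((‖a‖ + 1) * (1 / ((N : ℝ) + 1)))) atTop (𝓝 0) := by
    simpa using (tendsto_one_div_add_atTop_nhds_zero_nat.const_mul (‖a‖ + 1)).sqrt
  exact squeeze_zero_norm (fun N => Real.le_sqrt_of_sq_le (hsq N)) hlim

lemma adjoint_mem_closure_adjoint_comp_image (m : H →L[ℂ] K)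
    (S : NonUnitalSubalgebra ℂ (K →L[ℂ] K)) (hS : m ∘L adjoint m ∈ S) :
    adjoint m ∈ closure ((adjoint m ∘L ·) '' S) := by
  have hx : (‖m ∘L adjoint m‖ + 1)⁻¹ • (m ∘L adjoint m) ∈ S := by
    rw [← Complex.coe_smul]
    exact S.smul_mem _ hS
  have hlim := (tendsto_adjoint_comp_one_sub_smul_pow m).const_sub (adjoint m)
  rw [sub_zero] at hlim
  refine mem_closure_of_tendsto hlim (Eventually.of_forall fun N =>
    ⟨_, one_sub_one_sub_pow_mem hx N, ?_⟩)
  change adjoint m ∘L (1 - _) = _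
  rw [comp_sub, one_def, comp_id]

def sandwich (m n : H →L[ℂ] K) : (K →L[ℂ] K) →L[ℂ] (H →L[ℂ] H) :=
  (compL ℂ H K H (adjoint m)).comp ((compL ℂ H K K).flip n)

@[simp]
lemma sandwich_apply (m n : H →L[ℂ] K) (b : K →L[ℂ] K) :
    sandwich m n b = adjoint m ∘L b ∘L n :=
  rfl

variable (M : Submodule ℂ (H →L[ℂ] K))

def IsTRO : Prop := ∀ m ∈ M, ∀ n ∈ M, ∀ l ∈ M, m ∘L adjoint n ∘L l ∈ M

variable {M}

lemma IsTRO.comp_adjoint_mul_subset (hM : IsTRO M) :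
    {R : K →L[ℂ] K | ∃ k ∈ M, ∃ l ∈ M, R = k ∘L adjoint l} *
      {R | ∃ k ∈ M, ∃ l ∈ M, R = k ∘L adjoint l} ⊆
      {R | ∃ k ∈ M, ∃ l ∈ M, R = k ∘L adjoint l} := by
  rintro _ ⟨_, ⟨k, hk, l, hl, rfl⟩, _, ⟨k', hk', l', hl', rfl⟩, rfl⟩
  exact ⟨k ∘L adjoint l ∘L k', hM k hk l hl k' hk', l', hl', rfl⟩

def IsTRO.spanCompAdjoint (hM : IsTRO M) : NonUnitalSubalgebra ℂ (K →L[ℂ] K) :=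
  (span ℂ {R | ∃ k ∈ M, ∃ l ∈ M, R = k ∘L adjoint l}).toNonUnitalSubalgebra
    fun _ _ => mul_mem_span_of_mul_subset hM.comp_adjoint_mul_subset

lemma IsTRO.adjoint_comp_mem_closure (hM : IsTRO M) {m n : H →L[ℂ] K} (hm : m ∈ M)
    (hn : n ∈ M) :
    adjoint m ∘L n ∈ closure {T | ∃ m ∈ M,
      ∃ d ∈ span ℂ {R : K →L[ℂ] K | ∃ k ∈ M, ∃ l ∈ M, R = k ∘L adjoint l},
      ∃ n ∈ M, T = adjoint m ∘L d ∘L n} := by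
  have hmm : m ∘L adjoint m ∈ hM.spanCompAdjoint := subset_span ⟨m, hm, m, hm, rfl⟩
  refine map_mem_closure (f := (· ∘L n)) (continuous_id.clm_comp continuous_const)
    (adjoint_mem_closure_adjoint_comp_image m _ hmm) ?_
  rintro _ ⟨d, hd, rfl⟩
  exact ⟨m, hm, d, hd, n, hn, rfl⟩

theorem IsTRO.closure_add_csp_eq_csp (hM : IsTRO M) (A : Submodule ℂ (H →L[ℂ] H))
    (B : Submodule ℂ (K →L[ℂ] K))
    (hA : (A : Set (H →L[ℂ] H)) =
      csp {T | ∃ m ∈ M, ∃ b ∈ B, ∃ n ∈ M, T = (adjoint m) ∘L b ∘L n}) :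
    closure {T : H →L[ℂ] H | ∃ a ∈ A,
        ∃ c ∈ csp {S : H →L[ℂ] H | ∃ m ∈ M, ∃ n ∈ M, S = (adjoint m) ∘L n}, T = a + c} =
      csp {T : H →L[ℂ] H | ∃ m ∈ M,
        ∃ b ∈ closure {S : K →L[ℂ] K | ∃ b' ∈ B,
          ∃ d ∈ csp {R : K →L[ℂ] K | ∃ k ∈ M, ∃ l ∈ M, R = k ∘L (adjoint l)}, S = b' + d},
        ∃ n ∈ M, T = (adjoint m) ∘L b ∘L n} := by
  simp only [csp_eq_topologicalClosure, SetLike.mem_coe, setOf_exists_add_eq_sup] at hA ⊢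
  set C := (span ℂ {S : H →L[ℂ] H | ∃ m ∈ M, ∃ n ∈ M, S = adjoint m ∘L n}).topologicalClosure
  set D := (span ℂ {R : K →L[ℂ] K | ∃ k ∈ M, ∃ l ∈ M, R = k ∘L adjoint l}).topologicalClosure
  rw [← topologicalClosure_coe, SetLike.coe_set_eq]
  refine le_antisymm (topologicalClosure_minimal _ (sup_le ?_ ?_) (isClosed_topologicalClosure _))
    (topologicalClosure_minimal _ (span_le.2 ?_) (isClosed_topologicalClosure _))
  · intro a ha
    rw [← SetLike.mem_coe, hA] at ha
    refine topologicalClosure_mono (span_mono ?_) ha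
    rintro _ ⟨m, hm, b, hb, n, hn, rfl⟩
    exact ⟨m, hm, b, subset_closure (mem_sup_left hb), n, hn, rfl⟩
  · refine topologicalClosure_minimal _ (span_le.2 ?_) (isClosed_topologicalClosure _)
    rintro _ ⟨m, hm, n, hn, rfl⟩
    refine closure_minimal ?_ (isClosed_topologicalClosure _) (hM.adjoint_comp_mem_closure hm hn)
    rintro _ ⟨m, hm, d, hd, n, hn, rfl⟩
    have hdB₀ : d ∈ closure ((B ⊔ D : Submodule ℂ (K →L[ℂ] K)) : Set (K →L[ℂ] K)) :=
      subset_closure (mem_sup_right (le_topologicalClosure _ hd))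
    exact le_topologicalClosure _ (subset_span ⟨m, hm, d, hdB₀, n, hn, rfl⟩)
  · rintro _ ⟨m, hm, b, hb, n, hn, rfl⟩
    have hC : D ≤ C.comap (sandwich m n : (K →L[ℂ] K) →ₗ[ℂ] (H →L[ℂ] H)) := by
      refine topologicalClosure_minimal _ (span_le.2 ?_)
        ((isClosed_topologicalClosure _).preimage (sandwich m n).continuous)
      rintro _ ⟨k, hk, l, hl, rfl⟩
      refine le_topologicalClosure _
        (subset_span ⟨l ∘L adjoint k ∘L m, hM l hl k hk m hm, n, hn, ?_⟩)
      simp only [coe_coe, sandwich_apply, adjoint_comp, adjoint_adjoint, comp_assoc]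
    have hBD : B ⊔ D ≤ (A ⊔ C).comap (sandwich m n : (K →L[ℂ] K) →ₗ[ℂ] (H →L[ℂ] H)) := by
      refine sup_le (fun b hb => mem_sup_left ?_) (hC.trans (comap_mono le_sup_right))
      rw [← SetLike.mem_coe, hA]
      exact le_topologicalClosure _ (subset_span ⟨m, hm, b, hb, n, hn, rfl⟩)
    rw [topologicalClosure_coe]
    exact map_mem_closure (f := sandwich m n) (sandwich m n).continuous hb fun b hb => hBD hb

variable (M) in
def adjointSubmodule : Submodule ℂ (K →L[ℂ] H) :=
  M.comap (adjoint : (K →L[ℂ] H) ≃ₗᵢ⋆[ℂ] (H →L[ℂ] K)).toLinearEquiv.toLinearMap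

lemma mem_adjointSubmodule {T : K →L[ℂ] H} : T ∈ adjointSubmodule M ↔ adjoint T ∈ M :=
  Iff.rfl

lemma exists_mem_adjointSubmodule {P : (K →L[ℂ] H) → Prop} :
    (∃ T ∈ adjointSubmodule M, P T) ↔ ∃ m ∈ M, P (adjoint m) :=
  ⟨fun ⟨T, hT, hP⟩ => ⟨adjoint T, hT, by rwa [adjoint_adjoint]⟩,
    fun ⟨m, hm, hP⟩ => ⟨adjoint m, by rwa [mem_adjointSubmodule, adjoint_adjoint], hP⟩⟩

lemma IsTRO.adjointSubmodule (hM : IsTRO M) : IsTRO (adjointSubmodule M) := by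
  intro m hm n hn l hl
  rw [mem_adjointSubmodule] at hm hn hl ⊢
  simpa only [adjoint_comp, adjoint_adjoint, comp_assoc] using hM _ hl _ hn _ hm

end TRO

theorem stmt7 {H K : Type*}
    [NormedAddCommGroup H] [InnerProductSpace ℂ H] [CompleteSpace H]
    [NormedAddCommGroup K] [InnerProductSpace ℂ K] [CompleteSpace K]
    (M : Submodule ℂ (H →L[ℂ] K))
    (hTRO : ∀ m ∈ M, ∀ n ∈ M, ∀ l ∈ M, m ∘L (adjoint n) ∘L l ∈ M)
    (A : Submodule ℂ (H →L[ℂ] H))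
    (B : Submodule ℂ (K →L[ℂ] K))
    (hA : (A : Set (H →L[ℂ] H)) =
      csp {T | ∃ m ∈ M, ∃ b ∈ B, ∃ n ∈ M, T = (adjoint m) ∘L b ∘L n})
    (hB : (B : Set (K →L[ℂ] K)) =
      csp {T | ∃ m ∈ M, ∃ a ∈ A, ∃ n ∈ M, T = m ∘L a ∘L (adjoint n)}) :
    (closure {T : H →L[ℂ] H | ∃ a ∈ A,
        ∃ c ∈ csp {S : H →L[ℂ] H | ∃ m ∈ M, ∃ n ∈ M, S = (adjoint m) ∘L n}, T = a + c} =
      csp {T : H →L[ℂ] H | ∃ m ∈ M,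
        ∃ b ∈ closure {S : K →L[ℂ] K | ∃ b' ∈ B,
          ∃ d ∈ csp {R : K →L[ℂ] K | ∃ k ∈ M, ∃ l ∈ M, R = k ∘L (adjoint l)}, S = b' + d},
        ∃ n ∈ M, T = (adjoint m) ∘L b ∘L n}) ∧
    (closure {T : K →L[ℂ] K | ∃ b ∈ B,
        ∃ d ∈ csp {S : K →L[ℂ] K | ∃ k ∈ M, ∃ l ∈ M, S = k ∘L (adjoint l)}, T = b + d} =
      csp {T : K →L[ℂ] K | ∃ m ∈ M,
        ∃ a ∈ closure {S : H →L[ℂ] H | ∃ a' ∈ A,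
          ∃ c ∈ csp {R : H →L[ℂ] H | ∃ k ∈ M, ∃ l ∈ M, R = (adjoint k) ∘L l}, S = a' + c},
        ∃ n ∈ M, T = m ∘L a ∘L (adjoint n)}) := by
  refine ⟨IsTRO.closure_add_csp_eq_csp hTRO A B hA, ?_⟩
  have hB' : (B : Set (K →L[ℂ] K)) = csp {T | ∃ m ∈ adjointSubmodule M, ∃ a ∈ A,
      ∃ n ∈ adjointSubmodule M, T = adjoint m ∘L a ∘L n} := by
    simpa only [exists_mem_adjointSubmodule, adjoint_adjoint] using hB
  simpa only [exists_mem_adjointSubmodule, adjoint_adjoint] using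
    (IsTRO.adjointSubmodule hTRO).closure_add_csp_eq_csp B A hB'
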